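/- arXiv:1308.2737 — 2 statements merged into one kernel-verified Lean document; each statement's English description precedes it below -/
import Mathlib

section
/- Let α₁ = -2-√3 and d → ∞. Then the optimal H^∞ approximation error J_opt(d) = inf over stable causal ψ of ‖z^{-d} - ψ(z)φ(z)‖_{H^∞}, where φ(z) = (1/6)+(2/3)z⁻¹+(1/6)z⁻², equals |α₁|^{-d} and tends to 0 as d → ∞. -/
open MeasureTheory

/-- ℓ² norm of a causal (one-sided) real sequence. -/
noncomputable def l2norm (c : ℕ → ℝ) : ℝ := Real.sqrt (∑' n : ℕ, (c n) ^ 2)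

/-- L² norm of a real signal on `ℝ₊ = [0, ∞)`. -/
noncomputable def L2norm (f : ℝ → ℝ) : ℝ := Real.sqrt (∫ t in Set.Ici (0 : ℝ), (f t) ^ 2)

/-- Convolution of causal sequences: `(e ∗ c)(n) = ∑_{k=0}^{n} e(n-k) c(k)`. -/
def cconv (e c : ℕ → ℝ) (n : ℕ) : ℝ := ∑ k ∈ Finset.range (n + 1), e (n - k) * c k

/-- Z-transform of a causal sequence, evaluated at `w`: `ê(w) = ∑_{n≥0} e(n) w⁻ⁿ`. -/
noncomputable def Ztrans (e : ℕ → ℝ) (w : ℂ) : ℂ := ∑' n : ℕ, (e n : ℂ) * w⁻¹ ^ n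

/-- `H^∞` norm of a causal sequence: sup of `|ê(e^{iθ})|` over the unit circle. -/
noncomputable def HinfNorm (e : ℕ → ℝ) : ℝ :=
  ⨆ θ : ℝ, ‖Ztrans e (Complex.exp (θ * Complex.I))‖

/-- The `d`-step delay sequence, i.e. the impulse response of `z^{-d}`. -/
def delaySeq (d : ℕ) (n : ℕ) : ℝ := if n = d then 1 else 0
/-- The sampled cubic B-spline sequence: `φ_s = (1/6, 2/3, 1/6, 0, 0, …)`, whose
Z-transform is `φ(z) = 1/6 + (2/3)z⁻¹ + (1/6)z⁻²`. -/
noncomputable def cubicPhis : ℕ → ℝ := fun n =>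
  if n = 0 then 1/6 else if n = 1 then 2/3 else if n = 2 then 1/6 else 0

/-- The optimal H^∞ approximation error with delay `d`: infimum over stable causal
filters `ψ` of `‖z^{-d} - ψ(z)φ(z)‖_∞`. -/
noncomputable def Jopt (d : ℕ) : ℝ :=
  ⨅ ψ : {ψ : ℕ → ℝ // Summable fun n => |ψ n|},
    HinfNorm (fun n => delaySeq d n - cconv ψ.1 cubicPhis n)

/-!
Write `w = z⁻¹`. A causal `ℓ¹` sequence `e` defines `E(w) = ∑ eₙ wⁿ`, holomorphic on the unit
disk and continuous up to the circle, where it is the Z-transform; by the maximum modulus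
principle `|E(w)| ≤ ‖e‖_∞` on the closed disk. The B-spline symbol vanishes at
`w₀ = √3 - 2 = 1 / α₁`, so every error `δ_d - ψ ∗ φ` takes the value `w₀^d` there and
`J_opt(d) ≥ |w₀|^d`. Conversely `φ(w) = -(6 w₀)⁻¹ (w - w₀)(1 - w₀ w)`, so
`ψ = (w^d - w₀^d) / φ` is a polynomial times a geometric series, hence `ℓ¹`, and leaves the
constant error `w₀^d`, of `H^∞` norm `|w₀|^d = (2 + √3)^{-d}`.
-/

open Finset in
theorem cconv_eq_sum_antidiagonal (e c : ℕ → ℝ) (n : ℕ) :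
    cconv e c n = ∑ kl ∈ antidiagonal n, e kl.1 * c kl.2 := by
  rw [← Finset.Nat.sum_antidiagonal_swap]
  exact Finset.Nat.sum_antidiagonal_eq_sum_range_succ (fun i j => e j * c i) n |>.symm

open PowerSeries in
theorem cconv_eq_coeff_mul (e c : ℕ → ℝ) (n : ℕ) :
    cconv e c n = coeff n (mk e * mk c) := by
  simp only [cconv_eq_sum_antidiagonal, coeff_mul, coeff_mk]

open PowerSeries in
theorem PowerSeries.summable_abs_coeff_mul {f g : ℝ⟦X⟧} (hf : Summable fun n => |coeff n f|)
    (hg : Summable fun n => |coeff n g|) : Summable fun n => |coeff n (f * g)| := by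
  simpa only [coeff_mul, Real.norm_eq_abs] using
    summable_norm_sum_mul_antidiagonal_of_summable_norm (f := fun n => coeff n f)
      (g := fun n => coeff n g) (by simpa only [Real.norm_eq_abs] using hf)
      (by simpa only [Real.norm_eq_abs] using hg)

theorem Polynomial.summable_abs_coeff (p : Polynomial ℝ) : Summable fun n => |p.coeff n| :=
  summable_of_ne_finset_zero (s := p.support) fun n hn => by
    rw [Polynomial.notMem_support_iff.mp hn, abs_zero]

open PowerSeries in
theorem PowerSeries.mk_pow_mul_one_sub_C_mul_X {R : Type*} [CommRing R] (a : R) :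
    mk (a ^ ·) * (1 - C a * X) = 1 := by
  have := congrArg (rescale a) (mk_one_mul_one_sub_eq_one (S := R))
  simpa [rescale_mk, rescale_X] using this

noncomputable def seqEval (e : ℕ → ℝ) (w : ℂ) : ℂ := ∑' n, (e n : ℂ) * w ^ n

theorem Ztrans_eq_seqEval_inv (e : ℕ → ℝ) (z : ℂ) : Ztrans e z = seqEval e z⁻¹ := rfl

section seqEval

variable {e : ℕ → ℝ} {w : ℂ}

theorem norm_mul_pow_le (e : ℕ → ℝ) (hw : ‖w‖ ≤ 1) (n : ℕ) : ‖(e n : ℂ) * w ^ n‖ ≤ |e n| := by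
  rw [norm_mul, norm_pow, Complex.norm_real, Real.norm_eq_abs]
  exact mul_le_of_le_one_right (abs_nonneg _) (pow_le_one₀ (norm_nonneg w) hw)

theorem summable_norm_mul_pow (he : Summable fun n => |e n|) (hw : ‖w‖ ≤ 1) :
    Summable fun n => ‖(e n : ℂ) * w ^ n‖ :=
  he.of_nonneg_of_le (fun _ => norm_nonneg _) (norm_mul_pow_le e hw)

theorem norm_seqEval_le (he : Summable fun n => |e n|) (hw : ‖w‖ ≤ 1) :
    ‖seqEval e w‖ ≤ ∑' n, |e n| :=
  (norm_tsum_le_tsum_norm (summable_norm_mul_pow he hw)).trans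
    ((summable_norm_mul_pow he hw).tsum_le_tsum (norm_mul_pow_le e hw) he)

theorem seqEval_sub {c : ℕ → ℝ} (he : Summable fun n => |e n|) (hc : Summable fun n => |c n|)
    (hw : ‖w‖ ≤ 1) : seqEval (fun n => e n - c n) w = seqEval e w - seqEval c w := by
  rw [seqEval, seqEval, seqEval, ← (summable_norm_mul_pow he hw).of_norm.tsum_sub
    (summable_norm_mul_pow hc hw).of_norm]
  push_cast
  simp only [sub_mul]

theorem summable_abs_cconv {c : ℕ → ℝ} (he : Summable fun n => |e n|)
    (hc : Summable fun n => |c n|) : Summable fun n => |cconv e c n| := by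
  simp only [cconv_eq_coeff_mul]
  exact PowerSeries.summable_abs_coeff_mul (by simpa using he) (by simpa using hc)

theorem seqEval_cconv {c : ℕ → ℝ} (he : Summable fun n => |e n|) (hc : Summable fun n => |c n|)
    (hw : ‖w‖ ≤ 1) : seqEval (cconv e c) w = seqEval e w * seqEval c w := by
  rw [seqEval, seqEval, seqEval, tsum_mul_tsum_eq_tsum_sum_antidiagonal_of_summable_norm
    (summable_norm_mul_pow he hw) (summable_norm_mul_pow hc hw)]
  refine tsum_congr fun n => ?_
  rw [cconv_eq_sum_antidiagonal, Complex.ofReal_sum, Finset.sum_mul]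
  refine Finset.sum_congr rfl fun kl hkl => ?_
  rw [← Finset.HasAntidiagonal.mem_antidiagonal.mp hkl, pow_add]
  push_cast
  ring

theorem seqEval_delaySeq (d : ℕ) (w : ℂ) : seqEval (delaySeq d) w = w ^ d := by
  rw [seqEval, tsum_eq_single d fun n hn => by simp [delaySeq, hn]]
  simp [delaySeq]

theorem diffContOnCl_seqEval (he : Summable fun n => |e n|) :
    DiffContOnCl ℂ (seqEval e) (Metric.ball 0 1) := by
  refine ⟨Complex.differentiableOn_tsum_of_summable_norm he
    (fun n => (Differentiable.differentiableOn (by fun_prop))) Metric.isOpen_ball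
    fun n w hw => norm_mul_pow_le e (mem_ball_zero_iff.mp hw).le n, ?_⟩
  rw [closure_ball 0 one_ne_zero]
  exact continuousOn_tsum (fun n => (Continuous.continuousOn (by fun_prop))) he
    fun n w hw => norm_mul_pow_le e (mem_closedBall_zero_iff.mp hw) n

theorem norm_exp_mul_I_inv (θ : ℝ) : ‖(Complex.exp (θ * Complex.I))⁻¹‖ = 1 := by
  rw [norm_inv, Complex.norm_exp_ofReal_mul_I, inv_one]

theorem norm_seqEval_le_HinfNorm (he : Summable fun n => |e n|) (hw : ‖w‖ ≤ 1) :
    ‖seqEval e w‖ ≤ HinfNorm e := by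
  have hbdd : BddAbove (Set.range fun θ : ℝ => ‖Ztrans e (Complex.exp (θ * Complex.I))‖) :=
    ⟨∑' n, |e n|, Set.forall_mem_range.mpr fun θ =>
      norm_seqEval_le he (norm_exp_mul_I_inv θ).le⟩
  refine Complex.norm_le_of_forall_mem_frontier_norm_le Metric.isBounded_ball
    (diffContOnCl_seqEval he) (fun z hz => ?_)
    (by rwa [closure_ball 0 one_ne_zero, mem_closedBall_zero_iff])
  rw [frontier_ball 0 one_ne_zero, mem_sphere_zero_iff_norm] at hz
  obtain ⟨θ, rfl⟩ := (Complex.norm_eq_one_iff z).mp hz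
  have : Complex.exp (θ * Complex.I) = (Complex.exp ((-θ : ℝ) * Complex.I))⁻¹ := by
    rw [← Complex.exp_neg]; push_cast; ring_nf
  rw [this, ← Ztrans_eq_seqEval_inv]
  exact le_ciSup hbdd (-θ)

end seqEval

theorem summable_abs_delaySeq (d : ℕ) : Summable fun n => |delaySeq d n| :=
  summable_of_ne_finset_zero (s := {d}) fun n hn => by
    simp [delaySeq, Finset.notMem_singleton.mp hn]

theorem norm_pow_le_HinfNorm_delaySeq_sub_cconv {ψ φ : ℕ → ℝ} {w : ℂ} (d : ℕ)
    (hψ : Summable fun n => |ψ n|) (hφ : Summable fun n => |φ n|) (hw : ‖w‖ ≤ 1)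
    (hroot : seqEval φ w = 0) :
    ‖w‖ ^ d ≤ HinfNorm (fun n => delaySeq d n - cconv ψ φ n) := by
  have herr : Summable fun n => |delaySeq d n - cconv ψ φ n| :=
    ((summable_abs_delaySeq d).add (summable_abs_cconv hψ hφ)).of_nonneg_of_le
      (fun _ => abs_nonneg _) fun n => abs_sub _ _
  have heval : seqEval (fun n => delaySeq d n - cconv ψ φ n) w = w ^ d := by
    rw [seqEval_sub (summable_abs_delaySeq d) (summable_abs_cconv hψ hφ) hw,
      seqEval_cconv hψ hφ hw, hroot, mul_zero, sub_zero, seqEval_delaySeq]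
  simpa [heval] using norm_seqEval_le_HinfNorm herr hw

theorem HinfNorm_mul_delaySeq (c : ℝ) (d : ℕ) :
    HinfNorm (fun n => c * delaySeq d n) = |c| := by
  have hZ (z : ℂ) : Ztrans (fun n => c * delaySeq d n) z = c * z⁻¹ ^ d := by
    rw [Ztrans_eq_seqEval_inv, seqEval, tsum_eq_single d fun n hn => by simp [delaySeq, hn]]
    simp [delaySeq]
  simp only [HinfNorm, hZ, norm_mul, norm_pow, norm_exp_mul_I_inv, one_pow, mul_one,
    Complex.norm_real, Real.norm_eq_abs, ciSup_const]

open Polynomial in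
noncomputable def delayQuotient {R : Type*} [CommRing R] (a : R) (d : ℕ) : R[X] :=
  ∑ i ∈ Finset.range d, X ^ i * C a ^ (d - 1 - i)

open PowerSeries in
theorem coe_delayQuotient_mul {R : Type*} [CommRing R] (a : R) (d : ℕ) :
    (delayQuotient a d : R⟦X⟧) * (X - C a) = X ^ d - C (a ^ d) := by
  have := congrArg (Polynomial.coeToPowerSeries.ringHom (R := R))
    (geom_sum₂_mul Polynomial.X (Polynomial.C a) d)
  simpa [delayQuotient] using this

noncomputable def cubicPhisRoot : ℝ := Real.sqrt 3 - 2

theorem cubicPhisRoot_sq_add : cubicPhisRoot ^ 2 + 4 * cubicPhisRoot + 1 = 0 := by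
  have := Real.sq_sqrt (show (0 : ℝ) ≤ 3 by norm_num)
  rw [cubicPhisRoot]
  linear_combination this

theorem abs_cubicPhisRoot : |cubicPhisRoot| = (2 + Real.sqrt 3)⁻¹ := by
  have h3 := Real.sq_sqrt (show (0 : ℝ) ≤ 3 by norm_num)
  have hlt : Real.sqrt 3 < 2 := by nlinarith [Real.sqrt_nonneg 3]
  rw [cubicPhisRoot, abs_of_neg (by linarith)]
  exact eq_inv_of_mul_eq_one_left (by linear_combination -h3)

theorem abs_cubicPhisRoot_lt_one : |cubicPhisRoot| < 1 := by
  rw [abs_cubicPhisRoot]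
  exact inv_lt_one_of_one_lt₀ (by linarith [Real.sqrt_nonneg 3])

theorem cubicPhisRoot_ne_zero : cubicPhisRoot ≠ 0 :=
  abs_pos.mp (by rw [abs_cubicPhisRoot]; positivity)

theorem cubicPhis_eq_zero {n : ℕ} (hn : n ∉ Finset.range 3) : cubicPhis n = 0 := by
  have : 3 ≤ n := by simpa using hn
  simp [cubicPhis, show n ≠ 0 by omega, show n ≠ 1 by omega, show n ≠ 2 by omega]

theorem summable_abs_cubicPhis : Summable fun n => |cubicPhis n| :=
  summable_of_ne_finset_zero fun _ hn => by rw [cubicPhis_eq_zero hn, abs_zero]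

theorem seqEval_cubicPhis_cubicPhisRoot : seqEval cubicPhis cubicPhisRoot = 0 := by
  rw [seqEval, tsum_eq_sum fun _ hn => by rw [cubicPhis_eq_zero hn, Complex.ofReal_zero, zero_mul]]
  simp only [Finset.sum_range_succ, Finset.sum_range_zero, cubicPhis]
  have hroot : (cubicPhisRoot : ℂ) ^ 2 + 4 * cubicPhisRoot + 1 = 0 := by
    exact_mod_cast cubicPhisRoot_sq_add
  norm_num
  linear_combination hroot / 6

open PowerSeries in
theorem mk_cubicPhis : mk cubicPhis =
    C (-(6 * cubicPhisRoot)⁻¹) * (X - C cubicPhisRoot) * (1 - C cubicPhisRoot * X) := by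
  have hw := cubicPhisRoot_ne_zero
  ext n
  rcases n with _ | _ | _ | n <;> simp [cubicPhis, mul_sub, coeff_C, ← mul_assoc] <;> field_simp
  linear_combination 3 * cubicPhisRoot_sq_add

open PowerSeries in
noncomputable def optimalFilter (d : ℕ) : ℝ⟦X⟧ :=
  C (-(6 * cubicPhisRoot)) * (delayQuotient cubicPhisRoot d : ℝ⟦X⟧) * mk (cubicPhisRoot ^ ·)

open PowerSeries in
theorem optimalFilter_mul_mk_cubicPhis (d : ℕ) :
    optimalFilter d * mk cubicPhis = X ^ d - C (cubicPhisRoot ^ d) := by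
  have hC : C (-(6 * cubicPhisRoot)) * C (-(6 * cubicPhisRoot)⁻¹) = (1 : ℝ⟦X⟧) := by
    rw [← map_mul, neg_mul_neg, mul_inv_cancel₀ (mul_ne_zero (by norm_num) cubicPhisRoot_ne_zero),
      map_one]
  calc optimalFilter d * mk cubicPhis
      = C (-(6 * cubicPhisRoot)) * C (-(6 * cubicPhisRoot)⁻¹)
        * ((delayQuotient cubicPhisRoot d : ℝ⟦X⟧) * (X - C cubicPhisRoot))
        * (mk (cubicPhisRoot ^ ·) * (1 - C cubicPhisRoot * X)) := by
          rw [optimalFilter, mk_cubicPhis]; ring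
    _ = X ^ d - C (cubicPhisRoot ^ d) := by
      rw [hC, coe_delayQuotient_mul, mk_pow_mul_one_sub_C_mul_X, one_mul, mul_one]

open PowerSeries in
theorem summable_abs_coeff_optimalFilter (d : ℕ) :
    Summable fun n => |coeff n (optimalFilter d)| := by
  refine summable_abs_coeff_mul ?_ ?_
  · simp only [coeff_C_mul, abs_mul]
    exact ((delayQuotient cubicPhisRoot d).summable_abs_coeff.congr fun n => by
      rw [Polynomial.coeff_coe]).mul_left _
  · simpa only [coeff_mk, abs_pow] using
      summable_geometric_of_lt_one (abs_nonneg _) abs_cubicPhisRoot_lt_one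

open PowerSeries in
theorem delaySeq_sub_cconv_optimalFilter (d : ℕ) :
    (fun n => delaySeq d n - cconv (fun k => coeff k (optimalFilter d)) cubicPhis n) =
      fun n => cubicPhisRoot ^ d * delaySeq 0 n := by
  have hmk : mk (fun k => coeff k (optimalFilter d)) = optimalFilter d :=
    ext fun _ => coeff_mk _ _
  ext n
  rw [cconv_eq_coeff_mul, hmk, optimalFilter_mul_mk_cubicPhis, map_sub, coeff_X_pow, coeff_C]
  by_cases hn : n = 0 <;> simp [delaySeq, hn]

theorem Jopt_eq_abs_cubicPhisRoot_pow (d : ℕ) : Jopt d = |cubicPhisRoot| ^ d := by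
  let ψopt : {ψ : ℕ → ℝ // Summable fun n => |ψ n|} := ⟨_, summable_abs_coeff_optimalFilter d⟩
  have : Nonempty {ψ : ℕ → ℝ // Summable fun n => |ψ n|} := ⟨ψopt⟩
  refine le_antisymm ?_ (le_ciInf fun ψ => ?_)
  · have hψopt : HinfNorm (fun n => delaySeq d n - cconv ψopt.1 cubicPhis n) =
        |cubicPhisRoot| ^ d := by
      rw [delaySeq_sub_cconv_optimalFilter, HinfNorm_mul_delaySeq, abs_pow]
    exact hψopt ▸ ciInf_le ⟨0, Set.forall_mem_range.mpr fun ψ =>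
      Real.iSup_nonneg fun θ => norm_nonneg _⟩ ψopt
  · simpa using norm_pow_le_HinfNorm_delaySeq_sub_cconv d ψ.2 summable_abs_cubicPhis
      (by simpa using abs_cubicPhisRoot_lt_one.le) seqEval_cubicPhis_cubicPhisRoot

/-- The optimal error equals `|α₁|^{-d} = (2+√3)^{-d}` and tends to `0` as `d → ∞`. -/
theorem stmt15 :
    (∀ d : ℕ, Jopt d = (2 + Real.sqrt 3) ^ (-(d : ℤ))) ∧
    Filter.Tendsto Jopt Filter.atTop (nhds 0) := by
  have hJ (d : ℕ) : Jopt d = (2 + Real.sqrt 3) ^ (-(d : ℤ)) := by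
    rw [Jopt_eq_abs_cubicPhisRoot_pow, abs_cubicPhisRoot, zpow_neg, zpow_natCast, inv_pow]
  refine ⟨hJ, ?_⟩
  rw [show Jopt = (|cubicPhisRoot| ^ ·) from funext Jopt_eq_abs_cubicPhisRoot_pow]
  exact tendsto_pow_atTop_nhds_zero_of_lt_one (abs_nonneg _) abs_cubicPhisRoot_lt_one
end

section
/- If P ≻ 0 and AᵀPA - P ≺ 0 for real square matrices A, P, then the spectral radius of A is strictly less than 1. -/
/-!
Let `v ≠ 0` be a complex eigenvector of `A` with eigenvalue `μ`, and put `q = v* P v > 0`.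
Since `v* Aᴴ P A v = |μ|² q`, positivity of `P - Aᴴ P A` gives `(1 - |μ|²) q > 0`, so `|μ| < 1`.
The real hypotheses carry over to `ℂ` because the complex quadratic form of a real matrix at
`x = a + i b` has real part `aᵀ M a + bᵀ M b`.
-/

open Matrix
open scoped ComplexOrder

namespace Matrix

theorem exists_mulVec_eq_smul_of_mem_spectrum {K n : Type*} [Field K] [Fintype n] [DecidableEq n]
    {A : Matrix n n K} {μ : K} (h : μ ∈ spectrum K A) : ∃ v ≠ 0, A *ᵥ v = μ • v := by
  rw [← spectrum_toLin'] at h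
  obtain ⟨v, hv⟩ := (Module.End.HasEigenvalue.of_mem_spectrum h).exists_hasEigenvector
  exact ⟨v, hv.2, hv.apply_eq_smul⟩

theorem star_dotProduct_conjTranspose_mul_mul_mulVec_of_mulVec_eq_smul {R n : Type*} [CommRing R]
    [StarRing R] [Fintype n] {A P : Matrix n n R} {μ : R} {v : n → R} (hv : A *ᵥ v = μ • v) :
    star v ⬝ᵥ (Aᴴ * P * A) *ᵥ v = star μ * μ * (star v ⬝ᵥ P *ᵥ v) := by
  rw [mul_assoc, ← mulVec_mulVec, dotProduct_mulVec, ← star_mulVec, ← mulVec_mulVec, hv,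
    star_smul, mulVec_smul, smul_dotProduct, dotProduct_smul, smul_eq_mul, smul_eq_mul, mul_assoc]

theorem PosDef.norm_lt_one_of_mem_spectrum {𝕜 n : Type*} [RCLike 𝕜] [Fintype n] [DecidableEq n]
    {A P : Matrix n n 𝕜} (hP : P.PosDef) (hL : (P - Aᴴ * P * A).PosDef) {μ : 𝕜}
    (hμ : μ ∈ spectrum 𝕜 A) : ‖μ‖ < 1 := by
  obtain ⟨v, hv0, hv⟩ := exists_mulVec_eq_smul_of_mem_spectrum hμ
  have hq := RCLike.pos_iff.1 (hP.dotProduct_mulVec_pos hv0)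
  have hd := RCLike.pos_iff.1 (hL.dotProduct_mulVec_pos hv0)
  rw [sub_mulVec, dotProduct_sub, star_dotProduct_conjTranspose_mul_mul_mulVec_of_mulVec_eq_smul hv,
    RCLike.star_def, RCLike.conj_mul, ← RCLike.ofReal_pow, map_sub, RCLike.re_ofReal_mul] at hd
  have hμ_sq : ‖μ‖ ^ 2 < 1 := by nlinarith [hd.1, hq.1]
  exact (pow_lt_one_iff_of_nonneg (norm_nonneg μ) two_ne_zero).1 hμ_sq

variable {n : Type*} [Fintype n]

theorem re_star_dotProduct_map_ofReal_mulVec (M : Matrix n n ℝ) (x : n → ℂ) :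
    (star x ⬝ᵥ M.map Complex.ofReal *ᵥ x).re =
      (fun i ↦ (x i).re) ⬝ᵥ M *ᵥ (fun i ↦ (x i).re) +
        (fun i ↦ (x i).im) ⬝ᵥ M *ᵥ (fun i ↦ (x i).im) := by
  simp only [dotProduct, mulVec, Pi.star_apply, map_apply, Complex.re_sum, Finset.mul_sum,
    ← Finset.sum_add_distrib]
  refine Finset.sum_congr rfl fun i _ ↦ Finset.sum_congr rfl fun j _ ↦ ?_
  simp only [Complex.mul_re, Complex.mul_im, Complex.star_def, Complex.conj_re, Complex.conj_im,
    Complex.ofReal_re, Complex.ofReal_im]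
  ring

theorem PosDef.map_ofReal {M : Matrix n n ℝ} (hM : M.PosDef) : (M.map Complex.ofReal).PosDef := by
  have hHerm := hM.isHermitian.map _ fun r ↦ (Complex.conj_ofReal r).symm
  refine of_dotProduct_mulVec_pos hHerm fun x hx ↦ Complex.pos_iff.2
    ⟨?_, (hHerm.im_star_dotProduct_mulVec_self x).symm⟩
  have hquad (y : n → ℝ) : 0 ≤ y ⬝ᵥ M *ᵥ y := by
    simpa using hM.posSemidef.dotProduct_mulVec_nonneg y
  have hquad_pos {y : n → ℝ} (hy : y ≠ 0) : 0 < y ⬝ᵥ M *ᵥ y := by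
    simpa using hM.dotProduct_mulVec_pos hy
  rw [re_star_dotProduct_map_ofReal_mulVec]
  by_cases hre : (fun i ↦ (x i).re) = 0
  · have him : (fun i ↦ (x i).im) ≠ 0 := fun him ↦
      hx (funext fun i ↦ Complex.ext (congrFun hre i) (congrFun him i))
    linarith [hquad (fun i ↦ (x i).re), hquad_pos him]
  · linarith [hquad (fun i ↦ (x i).im), hquad_pos hre]

end Matrix

/-- Discrete-time Lyapunov stability: if `P ≻ 0` and `AᵀPA - P ≺ 0`, then every
(complex) eigenvalue of `A` has modulus less than one. -/
theorem stmt17 (n : ℕ) (A P : Matrix (Fin n) (Fin n) ℝ)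
    (hP : P.PosDef) (hL : (-(Aᵀ * P * A - P)).PosDef) :
    ∀ μ ∈ spectrum ℂ (A.map (Complex.ofReal)), ‖μ‖ < 1 := by
  have hom (B : Matrix (Fin n) (Fin n) ℝ) : B.map Complex.ofReal = B.map Complex.ofRealHom := rfl
  have hmap : (-(Aᵀ * P * A - P)).map Complex.ofReal = P.map Complex.ofReal -
      (A.map Complex.ofReal)ᴴ * P.map Complex.ofReal * A.map Complex.ofReal := by
    rw [← conjTranspose_map _ fun r ↦ (Complex.conj_ofReal r).symm,
      conjTranspose_eq_transpose_of_trivial, neg_sub, Matrix.map_sub _ Complex.ofReal_sub]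
    simp only [hom, Matrix.map_mul]
  intro μ hμ
  exact hP.map_ofReal.norm_lt_one_of_mem_spectrum (hmap ▸ hL.map_ofReal) hμ
end
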